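/- (Weak augmentation suffices on modular lattices) Let L be a finite modular lattice and I ⊆ L a nonempty order ideal. If for all I₁ ∈ I and all maximal I₂ ∈ I with |I₁| < |I₂| there exists J ∈ I with I₁ < J ≤ I₁ ∨ I₂, then the same augmentation property holds for all pairs I₁, I₂ ∈ I with |I₁| < |I₂|. -/

import Mathlib

/-! Weak augmentation forces every maximal member of `𝓘` to have the largest height occurring
in `𝓘`, and lets any `I ∈ 𝓘` grow to a maximal `M₁` with `I ≤ M₁ ≤ I ⊔ M`, for any maximal `M`.
Given `I₁, I₂`, take a maximal `M ≥ I₂` and such an `M₁ ≥ I₁`. Then `J = (I₁ ⊔ I₂) ⊓ M₁` lies in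
`𝓘`, and the modular identity `ht (x ⊔ y) + ht (x ⊓ y) = ht x + ht y` (a consequence of covers
raising the height by exactly one) gives `ht J ≥ ht I₂ > ht I₁`. -/

/-- The height of an element: length of a maximal chain from the bottom. -/
noncomputable def ht {α : Type*} [Preorder α] (x : α) : ℕ := (Order.height x).toNat

section Preorder

variable {α : Type*} [Preorder α] [Finite α]

theorem height_ne_top_of_finite (x : α) : Order.height x ≠ ⊤ := by
  refine ne_top_of_le_ne_top (ENat.natCast_ne_top (Nat.card α)) (Order.height_le fun p _ => ?_)
  have := Nat.card_le_card_of_injective _ p.strictMono.injective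
  rw [Nat.card_fin] at this
  exact_mod_cast (Nat.lt_of_succ_le this).le

theorem coe_ht (x : α) : (ht x : ℕ∞) = Order.height x :=
  ENat.natCast_toNat (height_ne_top_of_finite x)

theorem ht_mono : Monotone (ht : α → ℕ) := fun _ y h =>
  ENat.toNat_le_toNat (Order.height_mono h) (height_ne_top_of_finite y)

theorem ht_strictMono : StrictMono (ht : α → ℕ) := fun x y h => by
  have := Order.height_strictMono h (height_ne_top_of_finite x).lt_top
  rwa [← coe_ht, ← coe_ht, Nat.cast_lt] at this

theorem ht_le_of_forall_lt {x : α} {n : ℕ} (h : ∀ y < x, ht y < n) : ht x ≤ n := by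
  rw [← Nat.cast_le (α := ℕ∞), coe_ht, Order.height_le_coe_iff]
  intro y hy
  rw [← coe_ht, Nat.cast_lt]
  exact h y hy

end Preorder

section Modular

variable {α : Type*} [Lattice α] [Finite α] [IsModularLattice α]

theorem ht_covBy {a b : α} (hab : a ⋖ b) : ht b = ht a + 1 := by
  induction hn : ht b using Nat.strong_induction_on generalizing a b with | _ n ih
  subst hn
  refine le_antisymm (ht_le_of_forall_lt fun c hcb => ?_) (ht_strictMono hab.lt)
  obtain ⟨d, hcd, hdb⟩ := exists_le_covBy_of_lt hcb
  refine Nat.lt_succ_of_le ((ht_mono hcd).trans (le_of_eq ?_))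
  rcases eq_or_ne a d with rfl | had
  · rfl
  -- `a` and the lower cover `d ≥ c` of `b` have equal heights, as both cover `a ⊓ d`.
  have hsup : a ⊔ d = b := hab.wcovBy.sup_eq hdb.wcovBy had
  have hda : a ⊓ d ⋖ a := inf_covBy_of_covBy_sup_right (hsup ▸ hdb)
  have hdd : a ⊓ d ⋖ d := inf_covBy_of_covBy_sup_left (hsup ▸ hab)
  rw [ih _ (ht_strictMono hab.lt) hda rfl, ih _ (ht_strictMono hdb.lt) hdd rfl]

theorem ht_sup_add_ht_inf (x y : α) : ht (x ⊔ y) + ht (x ⊓ y) = ht x + ht y := by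
  induction hn : ht y - ht (x ⊓ y) generalizing x with
  | zero =>
    have hxy : x ⊓ y = y := inf_le_right.eq_or_lt.resolve_right fun h => by
      have := ht_strictMono h
      omega
    rw [sup_eq_left.2 (inf_eq_right.1 hxy), hxy]
  | succ n ih =>
    have hlt : x ⊓ y < y := inf_le_right.lt_of_ne fun h => by
      rw [h] at hn
      omega
    obtain ⟨c, hc, hcy⟩ := exists_covBy_le_of_lt hlt
    have hxc : x ⊓ c = x ⊓ y := le_antisymm (inf_le_inf_left x hcy) (le_inf inf_le_left hc.le)
    have hx : x ⋖ x ⊔ c := covBy_sup_of_inf_covBy_right (hxc ▸ hc)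
    have hcy' : (x ⊔ c) ⊓ y = c := by
      rw [sup_comm, sup_inf_assoc_of_le x hcy, sup_eq_left.2 hc.le]
    have := ih (x ⊔ c) (by rw [hcy', ht_covBy hc]; omega)
    rw [hcy', sup_assoc, sup_eq_right.2 hcy, ht_covBy hx, ht_covBy hc] at this
    omega

theorem ht_le_ht_sup_inf {a b m M : α} (hbM : b ≤ M) (hm : m ≤ a ⊔ M) (hht : ht M ≤ ht m) :
    ht b ≤ ht ((a ⊔ b) ⊓ m) := by
  have h₁ := ht_sup_add_ht_inf (a ⊔ b) m
  have h₂ := ht_sup_add_ht_inf a b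
  have h₃ := ht_sup_add_ht_inf a M
  have h₄ : ht (a ⊔ b ⊔ m) ≤ ht (a ⊔ M) :=
    ht_mono (sup_le (sup_le_sup_left hbM a) hm)
  have h₅ : ht (a ⊓ b) ≤ ht (a ⊓ M) := ht_mono (inf_le_inf_left a hbM)
  omega

end Modular

section Augmentation

variable {α : Type*} [Lattice α] [Finite α] {𝓘 : Set α}

theorem ht_le_ht_of_maximal
    (hweak : ∀ I₁ I₂, I₁ ∈ 𝓘 → Maximal (· ∈ 𝓘) I₂ → ht I₁ < ht I₂ →
        ∃ J ∈ 𝓘, I₁ < J ∧ J ≤ I₁ ⊔ I₂)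
    {K M : α} (hK : K ∈ 𝓘) (hM : Maximal (· ∈ 𝓘) M) : ht K ≤ ht M := by
  by_contra! hMK
  obtain ⟨M', hKM', hM'⟩ := Finite.exists_le_maximal (p := (· ∈ 𝓘)) hK
  obtain ⟨J, hJ, hMJ, -⟩ := hweak M M' hM.1 hM' (hMK.trans_le (ht_mono hKM'))
  exact hMJ.not_ge (hM.2 hJ hMJ.le)

theorem exists_maximal_between
    (hweak : ∀ I₁ I₂, I₁ ∈ 𝓘 → Maximal (· ∈ 𝓘) I₂ → ht I₁ < ht I₂ →
        ∃ J ∈ 𝓘, I₁ < J ∧ J ≤ I₁ ⊔ I₂)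
    {I M : α} (hI : I ∈ 𝓘) (hM : Maximal (· ∈ 𝓘) M) :
    ∃ M₁, Maximal (· ∈ 𝓘) M₁ ∧ I ≤ M₁ ∧ M₁ ≤ I ⊔ M := by
  obtain ⟨M₁, hIM₁, hM₁⟩ :=
    Finite.exists_le_maximal (p := fun J => J ∈ 𝓘 ∧ J ≤ I ⊔ M) ⟨hI, le_sup_left⟩
  refine ⟨M₁, ⟨hM₁.1.1, fun K hK hM₁K => ?_⟩, hIM₁, hM₁.1.2⟩
  by_contra hKM₁
  have hlt : ht M₁ < ht M :=
    (ht_strictMono (hM₁K.lt_of_not_ge hKM₁)).trans_le (ht_le_ht_of_maximal hweak hK hM)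
  obtain ⟨J, hJ, hM₁J, hJle⟩ := hweak M₁ M hM₁.1.1 hM hlt
  have hJ' : J ≤ I ⊔ M := hJle.trans (sup_le hM₁.1.2 le_sup_right)
  exact hM₁J.not_ge (hM₁.2 ⟨hJ, hJ'⟩ hM₁J.le)

end Augmentation

theorem weak_augmentation_implies_augmentation_general {α : Type*} [Lattice α] [Fintype α]
    [IsModularLattice α]
    (𝓘 : Set α) (hideal : IsLowerSet 𝓘)
    (hweak : ∀ I₁ I₂, I₁ ∈ 𝓘 → Maximal (· ∈ 𝓘) I₂ → ht I₁ < ht I₂ →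
        ∃ J ∈ 𝓘, I₁ < J ∧ J ≤ I₁ ⊔ I₂) :
    ∀ I₁ I₂, I₁ ∈ 𝓘 → I₂ ∈ 𝓘 → ht I₁ < ht I₂ →
        ∃ J ∈ 𝓘, I₁ < J ∧ J ≤ I₁ ⊔ I₂ := by
  intro I₁ I₂ h₁ h₂ hlt
  obtain ⟨M, hI₂M, hM⟩ := Finite.exists_le_maximal (p := (· ∈ 𝓘)) h₂
  obtain ⟨M₁, hM₁, hI₁M₁, hM₁le⟩ := exists_maximal_between hweak h₁ hM
  have hJ : ht I₂ ≤ ht ((I₁ ⊔ I₂) ⊓ M₁) :=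
    ht_le_ht_sup_inf hI₂M hM₁le (ht_le_ht_of_maximal hweak hM.1 hM₁)
  refine ⟨_, hideal inf_le_right hM₁.1, (le_inf le_sup_left hI₁M₁).lt_of_ne ?_, inf_le_left⟩
  rintro h
  rw [← h] at hJ
  omega

/-- On a finite modular lattice, weak augmentation (against maximal independent sets)
implies full augmentation. -/
theorem weak_augmentation_implies_augmentation {α : Type*} [Lattice α] [Fintype α]
    [BoundedOrder α] [IsModularLattice α]
    (𝓘 : Set α) (hne : 𝓘.Nonempty) (hideal : IsLowerSet 𝓘)
    (hweak : ∀ I₁ I₂, I₁ ∈ 𝓘 → Maximal (· ∈ 𝓘) I₂ → ht I₁ < ht I₂ →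
        ∃ J ∈ 𝓘, I₁ < J ∧ J ≤ I₁ ⊔ I₂) :
    ∀ I₁ I₂, I₁ ∈ 𝓘 → I₂ ∈ 𝓘 → ht I₁ < ht I₂ →
        ∃ J ∈ 𝓘, I₁ < J ∧ J ≤ I₁ ⊔ I₂ :=
  weak_augmentation_implies_augmentation_general 𝓘 hideal hweak
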